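/- arXiv:2007.06680 — 2 statements merged into one kernel-verified Lean document; each statement's English description precedes it below -/
import Mathlib

section
/- Let G_i ≥ 0 for i = 1,...,t, m ≥ 2G², G_t ≤ G, k > 0, L > 0, and define η_t = k / (m + Σ_{i=1}^t G_i²)^{1/3}. If additionally η_t ≤ 1/(2L), then η_t^{-1} - η_{t-1}^{-1} ≤ (G² / (3 k³ L)) · η_t. -/
/-!
Write `S` for `m + ∑_{i=1}^{t-1} G_i²`, so that `η_{t-1} = k / S^{1/3}` and `η_t = k / (S + G_t²)^{1/3}`.
Put `a = S^{1/3}` and `b = (S + G_t²)^{1/3}`. Concavity of the cube root, in the algebraic form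
`3 a² (b - a) ≤ b³ - a³ = G_t²`, gives `b - a ≤ G² / (3 a²)`. The condition `η_t ≤ 1/(2L)` reads
`2 k L ≤ b`, and `m ≥ 2 G²` gives `b³ ≤ 3/2 a³`; together they yield `k L b ≤ a²`, which turns the
bound into `(b - a) / k ≤ G² / (3 k² L b) = G² / (3 k³ L) · η_t`.
-/

open Real

theorem Real.rpow_one_div_three_pow_three {x : ℝ} (hx : 0 ≤ x) : (x ^ ((1 : ℝ) / 3)) ^ 3 = x := by
  simpa using rpow_inv_natCast_pow hx three_ne_zero

theorem mul_sub_le_pow_three_sub_pow_three {R : Type*} [CommRing R] [LinearOrder R]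
    [IsStrictOrderedRing R] {a b : R} (ha : 0 ≤ a) (hab : a ≤ b) :
    3 * a ^ 2 * (b - a) ≤ b ^ 3 - a ^ 3 := by
  nlinarith [mul_nonneg (sub_nonneg.2 hab) (sub_nonneg.2 hab), mul_nonneg ha (sub_nonneg.2 hab),
    mul_nonneg (mul_nonneg (sub_nonneg.2 hab) (sub_nonneg.2 hab)) (sub_nonneg.2 hab)]

theorem Real.add_rpow_one_div_three_sub_le {x y : ℝ} (hx : 0 < x) (hy : 0 ≤ y) :
    (x + y) ^ ((1 : ℝ) / 3) - x ^ ((1 : ℝ) / 3) ≤ y / (3 * (x ^ ((1 : ℝ) / 3)) ^ 2) := by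
  have ha : 0 < x ^ ((1 : ℝ) / 3) := rpow_pos_of_pos hx _
  have hab : x ^ ((1 : ℝ) / 3) ≤ (x + y) ^ ((1 : ℝ) / 3) :=
    rpow_le_rpow hx.le (le_add_of_nonneg_right hy) (by norm_num)
  rw [le_div_iff₀' (by positivity)]
  have := mul_sub_le_pow_three_sub_pow_three ha.le hab
  rwa [rpow_one_div_three_pow_three (by linarith), rpow_one_div_three_pow_three hx.le,
    add_sub_cancel_left] at this

theorem mul_le_sq_of_two_mul_le_of_pow_three_le {R : Type*} [CommRing R] [LinearOrder R]
    [IsStrictOrderedRing R] {a b c : R} (hc : 0 < c) (hcb : 2 * c ≤ b)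
    (hba : 2 * b ^ 3 ≤ 3 * a ^ 3) : c * b ≤ a ^ 2 := by
  have hb : 0 < b := by linarith
  have hcb3 : (c * b) ^ 3 ≤ (a ^ 2) ^ 3 := by
    have h1 : (2 * (c * b)) ^ 3 ≤ (b ^ 2) ^ 3 := pow_le_pow_left₀ (by positivity) (by nlinarith) 3
    have h2 : (2 * b ^ 3) ^ 2 ≤ (3 * a ^ 3) ^ 2 := pow_le_pow_left₀ (by positivity) hba 2
    nlinarith [sq_nonneg (a ^ 3)]
  exact le_of_pow_le_pow_left₀ three_ne_zero (sq_nonneg a) hcb3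

theorem div_rpow_one_div_three_inv_sub_inv_le {x y g k L : ℝ} (hx : 0 ≤ x) (hy : 0 ≤ y)
    (hyg : y ≤ g) (hgx : 2 * g ≤ x) (hk : 0 < k) (hL : 0 < L)
    (hstep : k / (x + y) ^ ((1 : ℝ) / 3) ≤ 1 / (2 * L)) :
    (k / (x + y) ^ ((1 : ℝ) / 3))⁻¹ - (k / x ^ ((1 : ℝ) / 3))⁻¹ ≤
      g / (3 * k ^ 3 * L) * (k / (x + y) ^ ((1 : ℝ) / 3)) := by
  rcases hx.eq_or_lt with rfl | hx
  · -- `k / 0 = 0`: both step sizes vanish.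
    obtain rfl : y = 0 := by linarith
    simp
  set a := x ^ ((1 : ℝ) / 3)
  set b := (x + y) ^ ((1 : ℝ) / 3)
  have ha : 0 < a := rpow_pos_of_pos hx _
  have hb : 0 < b := rpow_pos_of_pos (by linarith) _
  have hkLb : k * L * b ≤ a ^ 2 := by
    refine mul_le_sq_of_two_mul_le_of_pow_three_le (by positivity) ?_ ?_
    · rw [div_le_div_iff₀ hb (by positivity)] at hstep
      linarith
    · rw [rpow_one_div_three_pow_three hx.le, rpow_one_div_three_pow_three (by linarith)]
      linarith
  have hba : b - a ≤ g / (3 * (k * L * b)) :=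
    calc b - a ≤ y / (3 * a ^ 2) := add_rpow_one_div_three_sub_le hx hy
      _ ≤ g / (3 * (k * L * b)) := by gcongr; linarith
  rw [inv_div, inv_div]
  calc b / k - a / k = (b - a) / k := sub_div .. |>.symm
    _ ≤ g / (3 * (k * L * b)) / k := by gcongr
    _ = g / (3 * k ^ 3 * L) * (k / b) := by field_simp

theorem stepsize_inverse_difference_bound
    (t : ℕ) (ht : 1 ≤ t) (Gs : ℕ → ℝ) (G m k L : ℝ)
    (hGs : ∀ i, 0 ≤ Gs i) (hGt : Gs t ≤ G) (hm : 2 * G ^ 2 ≤ m)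
    (hk : 0 < k) (hL : 0 < L)
    (η : ℕ → ℝ)
    (hη : ∀ n, η n = k / (m + ∑ i ∈ Finset.Icc 1 n, (Gs i) ^ 2) ^ ((1 : ℝ) / 3))
    (hηt : η t ≤ 1 / (2 * L)) :
    (η t)⁻¹ - (η (t - 1))⁻¹ ≤ G ^ 2 / (3 * k ^ 3 * L) * η t := by
  obtain ⟨n, rfl⟩ := Nat.exists_eq_add_of_le' ht
  have hsum : 0 ≤ ∑ i ∈ Finset.Icc 1 n, Gs i ^ 2 := Finset.sum_nonneg fun i _ ↦ sq_nonneg _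
  have hη_succ :
      η (n + 1) = k / (m + ∑ i ∈ Finset.Icc 1 n, Gs i ^ 2 + Gs (n + 1) ^ 2) ^ ((1 : ℝ) / 3) := by
    rw [hη, Finset.sum_Icc_succ_top (by omega), add_assoc]
  rw [hη_succ] at hηt ⊢
  rw [Nat.add_sub_cancel, hη]
  exact div_rpow_one_div_three_inv_sub_inv_le (by linarith [sq_nonneg G]) (sq_nonneg _)
    (pow_le_pow_left₀ (hGs _) hGt 2) (by linarith) hk hL hηt
end

section
/- Under the conditions η_t^{-1} - η_{t-1}^{-1} ≤ (G²/(3k³L))η_t, β_{t+1} = cη_t², 0 < β_{t+1} ≤ 1, and c = G²/(3k³L) + 104B², the coefficient satisfies η_t^{-1}(1-β_{t+1})(1 + 8η_t²B²) - η_{t-1}^{-1} ≤ -96B²η_t. -/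
lemma inv_mul_one_sub_mul_one_add_sq_le {η β a : ℝ} (hη : 0 < η) (hβ : 0 ≤ β) (ha : 0 ≤ a) :
    η⁻¹ * (1 - β) * (1 + a * η ^ 2) ≤ η⁻¹ + a * η - β * η⁻¹ := by
  have hexpand : η⁻¹ * (1 - β) * (1 + a * η ^ 2) = η⁻¹ + a * η - β * η⁻¹ - a * β * η := by
    field_simp
    ring
  have hdropped : 0 ≤ a * β * η := by positivity
  linarith

theorem lyapunov_coefficient_bound_general (ηt ηt' B G k L c βt1 : ℝ)
    (hηt : 0 < ηt)
    (hβ : βt1 = c * ηt ^ 2) (hβ0 : 0 < βt1)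
    (hc : c = G ^ 2 / (3 * k ^ 3 * L) + 104 * B ^ 2)
    (hdiff : ηt⁻¹ - ηt'⁻¹ ≤ G ^ 2 / (3 * k ^ 3 * L) * ηt) :
    ηt⁻¹ * (1 - βt1) * (1 + 8 * ηt ^ 2 * B ^ 2) - ηt'⁻¹ ≤ -96 * B ^ 2 * ηt := by
  have hβη : βt1 * ηt⁻¹ = c * ηt := by
    rw [hβ]
    field_simp
  calc ηt⁻¹ * (1 - βt1) * (1 + 8 * ηt ^ 2 * B ^ 2) - ηt'⁻¹
      = ηt⁻¹ * (1 - βt1) * (1 + 8 * B ^ 2 * ηt ^ 2) - ηt'⁻¹ := by ring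
    _ ≤ ηt⁻¹ + 8 * B ^ 2 * ηt - βt1 * ηt⁻¹ - ηt'⁻¹ := by
        gcongr
        exact inv_mul_one_sub_mul_one_add_sq_le hηt hβ0.le (by positivity)
    _ = (ηt⁻¹ - ηt'⁻¹) + 8 * B ^ 2 * ηt - c * ηt := by rw [hβη]; ring
    _ ≤ -96 * B ^ 2 * ηt := by rw [hc]; linarith

theorem lyapunov_coefficient_bound (ηt ηt' B G k L c βt1 : ℝ)
    (hηt : 0 < ηt) (hηt' : 0 < ηt') (hB : 0 < B) (hG : 0 < G) (hk : 0 < k) (hL : 0 < L)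
    (hβ : βt1 = c * ηt ^ 2) (hβ0 : 0 < βt1) (hβ1 : βt1 ≤ 1)
    (hc : c = G ^ 2 / (3 * k ^ 3 * L) + 104 * B ^ 2)
    (hdiff : ηt⁻¹ - ηt'⁻¹ ≤ G ^ 2 / (3 * k ^ 3 * L) * ηt) :
    ηt⁻¹ * (1 - βt1) * (1 + 8 * ηt ^ 2 * B ^ 2) - ηt'⁻¹ ≤ -96 * B ^ 2 * ηt :=
  lyapunov_coefficient_bound_general ηt ηt' B G k L c βt1 hηt hβ hβ0 hc hdiff
end
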